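/- Let p : Y → X be a finite-fold covering of compact Hausdorff spaces. Then C(Y) is a finitely generated projective module over C(X) with respect to the action (f·ξ)(y) = ξ(p(y)) f(y) for f ∈ C(Y), ξ ∈ C(X). -/

import Mathlib

noncomputable section

namespace Stmt14

open Set Function Filter Topology
open scoped Classical

variable {X Y : Type*} [TopologicalSpace X] [TopologicalSpace Y]

/-- Extension by zero of a product `φ · g` where `tsupport φ ⊆ U` and `g` is
continuous on the open set `U`. -/
theorem continuous_ext {U : Set X} (hU : IsOpen U) {φ : X → ℝ} (hφ : Continuous φ)
    (hsupp : tsupport φ ⊆ U) {g : X → ℂ} (hg : ContinuousOn g U) :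
    Continuous fun x => if x ∈ U then (φ x : ℂ) * g x else 0 := by
  rw [continuous_iff_continuousAt]
  intro x
  by_cases hx : x ∈ U
  · have h1 : ContinuousAt (fun x => (φ x : ℂ) * g x) x :=
      ((Complex.continuous_ofReal.comp hφ).continuousAt).mul (hg.continuousAt (hU.mem_nhds hx))
    apply h1.congr
    filter_upwards [hU.mem_nhds hx] with y hy
    simp [hy]
  · have hx' : x ∉ tsupport φ := fun h => hx (hsupp h)
    have hev : (fun y => if y ∈ U then (φ y : ℂ) * g y else 0) =ᶠ[nhds x] fun _ => (0 : ℂ) := by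
      filter_upwards [(isClosed_tsupport φ).isOpen_compl.mem_nhds hx'] with y hy
      have h0 : φ y = 0 := image_eq_zero_of_notMem_tsupport hy
      simp [h0]
    exact ContinuousAt.congr continuousAt_const hev.symm

variable {F : Type*} [TopologicalSpace F] {p : Y → X}

/-- The "coefficient" map: `f ↦ φ · (f ∘ sⱼ)` extended by zero, where `sⱼ` is the `j`-th
local section of the trivialization `t`. -/
def Phi (t : Bundle.Trivialization F p) (j : F) (φ : C(X, ℝ)) (hsupp : tsupport φ ⊆ t.baseSet)
    (f : C(Y, ℂ)) : C(X, ℂ) :=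
  ⟨fun x => if x ∈ t.baseSet then (φ x : ℂ) * f (t.toOpenPartialHomeomorph.symm (x, j)) else 0, by
    refine continuous_ext t.open_baseSet φ.continuous hsupp ?_
    refine f.continuous.comp_continuousOn ?_
    refine t.toOpenPartialHomeomorph.continuousOn_symm.comp
      ((continuous_id.prodMk continuous_const).continuousOn) ?_
    intro x hx
    rw [t.target_eq]
    exact ⟨hx, mem_univ _⟩⟩

@[simp] theorem Phi_apply (t : Bundle.Trivialization F p) (j : F) (φ : C(X, ℝ))
    (hsupp : tsupport φ ⊆ t.baseSet) (f : C(Y, ℂ)) (x : X) :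
    Phi t j φ hsupp f x =
      if x ∈ t.baseSet then (φ x : ℂ) * f (t.toOpenPartialHomeomorph.symm (x, j)) else 0 := rfl

theorem tsupport_comp_subset (hpc : Continuous p) (φ : C(X, ℝ)) {t : Bundle.Trivialization F p}
    (hsupp : tsupport φ ⊆ t.baseSet) : tsupport (fun y => φ (p y)) ⊆ t.source := by
  rw [t.source_eq]
  refine closure_minimal ?_ ((isClosed_tsupport φ).preimage hpc) |>.trans (preimage_mono hsupp)
  intro y hy
  exact subset_closure hy

/-- The "module map" back: `g ↦ (φ ∘ p) · (g ∘ p) · 1_{j-th sheet}`. -/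
def Psi [DiscreteTopology F] (hpc : Continuous p) (t : Bundle.Trivialization F p) (j : F)
    (φ : C(X, ℝ)) (hsupp : tsupport φ ⊆ t.baseSet) (g : C(X, ℂ)) : C(Y, ℂ) :=
  ⟨fun y => if y ∈ t.source then
      (φ (p y) : ℂ) * (g (p y) * (if (t y).2 = j then 1 else 0)) else 0, by
    refine continuous_ext t.open_source (φ.continuous.comp hpc)
      (tsupport_comp_subset hpc φ hsupp) ?_
    refine ContinuousOn.mul (g.continuous.comp hpc).continuousOn ?_
    have hd : Continuous (fun j' : F => if j' = j then (1 : ℂ) else 0) :=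
      continuous_of_discreteTopology
    exact hd.comp_continuousOn
      (continuous_snd.comp_continuousOn
        (t.toOpenPartialHomeomorph.continuousOn : ContinuousOn t t.source))⟩

@[simp] theorem Psi_apply [DiscreteTopology F] (hpc : Continuous p) (t : Bundle.Trivialization F p)
    (j : F) (φ : C(X, ℝ)) (hsupp : tsupport φ ⊆ t.baseSet) (g : C(X, ℂ)) (y : Y) :
    Psi hpc t j φ hsupp g y = if y ∈ t.source then
      (φ (p y) : ℂ) * (g (p y) * (if (t y).2 = j then 1 else 0)) else 0 := rfl

theorem Phi_add (t : Bundle.Trivialization F p) (j : F) (φ : C(X, ℝ))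
    (hsupp : tsupport φ ⊆ t.baseSet) (f g : C(Y, ℂ)) :
    Phi t j φ hsupp (f + g) = Phi t j φ hsupp f + Phi t j φ hsupp g := by
  ext x
  simp only [Phi_apply, ContinuousMap.add_apply]
  split_ifs <;> ring

theorem Phi_smul (hpc : Continuous p) (t : Bundle.Trivialization F p) (j : F) (φ : C(X, ℝ))
    (hsupp : tsupport φ ⊆ t.baseSet) (ξ : C(X, ℂ)) (f : C(Y, ℂ)) :
    Phi t j φ hsupp ((ξ.comp ⟨p, hpc⟩) * f) = ξ * Phi t j φ hsupp f := by
  ext x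
  simp only [Phi_apply, ContinuousMap.mul_apply, ContinuousMap.comp_apply,
    ContinuousMap.coe_mk]
  split_ifs with hx
  · rw [t.proj_symm_apply' hx]
    ring
  · ring

theorem Psi_add [DiscreteTopology F] (hpc : Continuous p) (t : Bundle.Trivialization F p) (j : F)
    (φ : C(X, ℝ)) (hsupp : tsupport φ ⊆ t.baseSet) (g₁ g₂ : C(X, ℂ)) :
    Psi hpc t j φ hsupp (g₁ + g₂) = Psi hpc t j φ hsupp g₁ + Psi hpc t j φ hsupp g₂ := by
  ext y
  simp only [Psi_apply, ContinuousMap.add_apply]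
  split_ifs <;> ring

theorem Psi_smul [DiscreteTopology F] (hpc : Continuous p) (t : Bundle.Trivialization F p) (j : F)
    (φ : C(X, ℝ)) (hsupp : tsupport φ ⊆ t.baseSet) (ξ g : C(X, ℂ)) :
    Psi hpc t j φ hsupp (ξ * g) = (ξ.comp ⟨p, hpc⟩) * Psi hpc t j φ hsupp g := by
  ext y
  simp only [Psi_apply, ContinuousMap.mul_apply, ContinuousMap.comp_apply,
    ContinuousMap.coe_mk]
  split_ifs <;> ring

/-- The key reconstruction identity over one trivializing chart. -/
theorem sum_Psi_Phi [DiscreteTopology F] [Fintype F] (hpc : Continuous p)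
    (t : Bundle.Trivialization F p) (φ : C(X, ℝ)) (hsupp : tsupport φ ⊆ t.baseSet)
    (f : C(Y, ℂ)) (y : Y) :
    ∑ j : F, Psi hpc t j φ hsupp (Phi t j φ hsupp f) y = ((φ (p y) : ℂ))^2 * f y := by
  by_cases hy : y ∈ t.source
  · have hb : p y ∈ t.baseSet := t.mem_source.mp hy
    have hrec : t.toOpenPartialHomeomorph.symm (p y, (t y).2) = y := by
      rw [t.mk_proj_snd hy]
      exact t.toOpenPartialHomeomorph.left_inv hy
    have : ∀ j : F, Psi hpc t j φ hsupp (Phi t j φ hsupp f) y =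
        if (t y).2 = j then ((φ (p y) : ℂ))^2 * f (t.toOpenPartialHomeomorph.symm (p y, j)) else 0 := by
      intro j
      simp only [Psi_apply, Phi_apply, hy, hb, if_true]
      split_ifs <;> ring
    rw [Finset.sum_congr rfl fun j _ => this j, Finset.sum_ite_eq Finset.univ (t y).2
      (fun j => ((φ (p y) : ℂ))^2 * f (t.toOpenPartialHomeomorph.symm (p y, j)))]
    simp [hrec]
  · have hb : p y ∉ t.baseSet := fun h => hy (t.mem_source.mpr h)
    have h0 : φ (p y) = 0 :=
      image_eq_zero_of_notMem_tsupport fun h => hb (hsupp h)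
    simp [hy, h0]

end Stmt14

end

/-- (Pavlov–Troitsky, converse direction.)  Let `p : Y → X` be a
finite-fold covering of compact Hausdorff spaces.  Then `C(Y)` is a finitely generated
projective module over `C(X)` with respect to the action `(f·ξ)(y) = ξ(p(y)) f(y)`,
i.e. the module structure obtained from the pullback homomorphism
`C(X) → C(Y), ξ ↦ ξ ∘ p`. -/
theorem stmt_14 {X Y : Type*} [TopologicalSpace X] [TopologicalSpace Y]
    [CompactSpace X] [CompactSpace Y] [T2Space X] [T2Space Y]
    (p : Y → X) (hp : IsCoveringMap p) (hfin : ∀ x : X, (p ⁻¹' {x}).Finite) :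
    letI : Module C(X, ℂ) C(Y, ℂ) := Module.compHom C(Y, ℂ)
      (ContinuousMap.compRightAlgHom ℂ ℂ ⟨p, hp.continuous⟩).toRingHom
    Module.Finite C(X, ℂ) C(Y, ℂ) ∧ Module.Projective C(X, ℂ) C(Y, ℂ) := by
  classical
  letI M : Module C(X, ℂ) C(Y, ℂ) := Module.compHom C(Y, ℂ)
    (ContinuousMap.compRightAlgHom ℂ ℂ ⟨p, hp.continuous⟩).toRingHom
  have hpc : Continuous p := hp.continuous
  have smul_def : ∀ (ξ : C(X, ℂ)) (f : C(Y, ℂ)), ξ • f = (ξ.comp ⟨p, hpc⟩) * f :=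
    fun _ _ => rfl
  -- discrete fibers and trivializations
  haveI hD : ∀ x : X, DiscreteTopology (p ⁻¹' {x} : Set Y) := fun x => (hp x).1
  haveI hNe : ∀ x : Set.range p, Nonempty (p ⁻¹' {(x : X)} : Set Y) :=
    fun x => ⟨⟨x.2.choose, x.2.choose_spec⟩⟩
  set t : ∀ x : Set.range p, Bundle.Trivialization (p ⁻¹' {(x : X)} : Set Y) p :=
    fun x => (hp x).toTrivialization with ht_def
  have ht : ∀ x : Set.range p, (x : X) ∈ (t x).baseSet :=
    fun x => (hp x).mem_toTrivialization_baseSet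
  -- finite subcover
  obtain ⟨s, hs⟩ := (isCompact_range hpc).elim_finite_subcover
    (fun x : Set.range p => (t x).baseSet)
    (fun x => (t x).open_baseSet) (fun x hx => Set.mem_iUnion.mpr ⟨⟨x, hx⟩, ht ⟨x, hx⟩⟩)
  -- partition of unity
  obtain ⟨pu, hpu⟩ := PartitionOfUnity.exists_isSubordinate (s := Set.range p)
    (isCompact_range hpc).isClosed (fun i : ↥s => (t ↑i).baseSet) (fun i => (t ↑i).open_baseSet)
    (by
      intro x hx0
      obtain ⟨i, hi, hx⟩ := Set.mem_iUnion₂.mp (hs hx0)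
      exact Set.mem_iUnion.mpr ⟨⟨i, hi⟩, hx⟩)
  -- square roots of the partition of unity
  set σ : ↥s → C(X, ℝ) := fun i =>
    ⟨fun x => Real.sqrt (pu i x), Real.continuous_sqrt.comp (pu i).continuous⟩ with hσ_def
  have hσsupp : ∀ i : ↥s, tsupport (σ i) ⊆ (t ↑i).baseSet := by
    intro i
    refine (closure_mono ?_).trans (hpu i)
    intro x hx
    simp only [hσ_def, ContinuousMap.coe_mk, Function.mem_support] at hx ⊢
    intro h0
    exact hx (by rw [h0, Real.sqrt_zero])
  have hσsq : ∀ (i : ↥s) (x : X), (σ i x) ^ 2 = pu i x := by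
    intro i x
    simpa [hσ_def] using Real.sq_sqrt (pu.nonneg i x)
  -- finite index type
  letI : ∀ i : ↥s, Fintype (p ⁻¹' {(↑i : X)} : Set Y) := fun i => (hfin _).fintype
  set κ := (i : ↥s) × (p ⁻¹' {(↑i : X)} : Set Y) with hκ_def
  -- the two module maps
  set Φ : C(Y, ℂ) → (κ → C(X, ℂ)) :=
    fun f k => Stmt14.Phi (t ↑k.1) k.2 (σ k.1) (hσsupp k.1) f with hΦ_def
  set Ψ : (κ → C(X, ℂ)) → C(Y, ℂ) :=
    fun g => ∑ k : κ, Stmt14.Psi hpc (t ↑k.1) k.2 (σ k.1) (hσsupp k.1) (g k) with hΨ_def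
  have key : ∀ f : C(Y, ℂ), Ψ (Φ f) = f := by
    intro f
    ext y
    rw [hΨ_def]
    rw [ContinuousMap.sum_apply]
    rw [← Finset.univ_sigma_univ, Finset.sum_sigma]
    calc ∑ i : ↥s, ∑ j : (p ⁻¹' {(↑i : X)} : Set Y),
          Stmt14.Psi hpc (t ↑i) j (σ i) (hσsupp i) (Φ f ⟨i, j⟩) y
        = ∑ i : ↥s, ((σ i (p y) : ℂ))^2 * f y := by
          refine Finset.sum_congr rfl fun i _ => ?_
          exact Stmt14.sum_Psi_Phi hpc (t ↑i) (σ i) (hσsupp i) f y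
      _ = (((∑ i : ↥s, pu i (p y) : ℝ)) : ℂ) * f y := by
          push_cast
          rw [Finset.sum_mul]
          refine Finset.sum_congr rfl fun i _ => ?_
          rw [← hσsq i (p y)]
          push_cast
          ring
      _ = f y := by
          have h1 : ∑ i : ↥s, pu i (p y) = 1 := by
            rw [← finsum_eq_sum_of_fintype]
            exact pu.sum_eq_one (Set.mem_range_self _)
          rw [h1]
          simp
  -- bundle into linear maps
  let Φₗ : C(Y, ℂ) →ₗ[C(X, ℂ)] (κ → C(X, ℂ)) :=
    { toFun := Φ
      map_add' := fun f g => by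
        funext k
        show Stmt14.Phi (t ↑k.1) k.2 (σ k.1) (hσsupp k.1) (f + g) =
          Stmt14.Phi (t ↑k.1) k.2 (σ k.1) (hσsupp k.1) f +
            Stmt14.Phi (t ↑k.1) k.2 (σ k.1) (hσsupp k.1) g
        exact Stmt14.Phi_add (t ↑k.1) k.2 (σ k.1) (hσsupp k.1) f g
      map_smul' := fun ξ f => by
        funext k
        show Φ (ξ • f) k = ξ * Φ f k
        rw [smul_def, hΦ_def]
        exact Stmt14.Phi_smul hpc (t ↑k.1) k.2 (σ k.1) (hσsupp k.1) ξ f }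
  let Ψₗ : (κ → C(X, ℂ)) →ₗ[C(X, ℂ)] C(Y, ℂ) :=
    { toFun := Ψ
      map_add' := fun g₁ g₂ => by
        rw [hΨ_def, ← Finset.sum_add_distrib]
        refine Finset.sum_congr rfl fun k _ => ?_
        exact Stmt14.Psi_add hpc (t ↑k.1) k.2 (σ k.1) (hσsupp k.1) (g₁ k) (g₂ k)
      map_smul' := fun ξ g => by
        show Ψ (ξ • g) = ξ • Ψ g
        rw [smul_def, hΨ_def, Finset.mul_sum]
        refine Finset.sum_congr rfl fun k _ => ?_
        show Stmt14.Psi hpc (t ↑k.1) k.2 (σ k.1) (hσsupp k.1) (ξ * g k) = _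
        exact Stmt14.Psi_smul hpc (t ↑k.1) k.2 (σ k.1) (hσsupp k.1) ξ (g k) }
  have hΨΦ : Ψₗ.comp Φₗ = LinearMap.id := by
    apply LinearMap.ext
    intro f
    simp only [LinearMap.comp_apply, LinearMap.id_apply]
    exact key f
  constructor
  · exact Module.Finite.of_surjective Ψₗ fun f => ⟨Φₗ f, key f⟩
  · exact Module.Projective.of_split Φₗ Ψₗ hΨΦ
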